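/- (Riemann–Roch for a cycle) Let C_n be the cycle graph on n ≥ 3 vertices. Its canonical divisor is the zero divisor and its genus is 1, and for every divisor D on C_n one has r(D) − r(−D) = deg(D), where r denotes the rank of a divisor. -/

import Mathlib

open Finset

/-- The degree of a vertex of a simple graph: the number of its neighbors. -/
noncomputable def degS {V : Type*} (G : SimpleGraph V) (v : V) : ℕ :=
  {u | G.Adj v u}.ncard

open Classical in
/-- The Laplacian matrix of a simple graph `G`:
`L v v = deg v`, `L v w = -1` if `v w` is an edge, and `0` otherwise. -/
noncomputable def lapS {V : Type*} (G : SimpleGraph V) (v w : V) : ℤ :=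
  if v = w then (degS G v : ℤ) else if G.Adj v w then -1 else 0

/-- The Laplacian applied to a firing function `f`, evaluated at `v`. -/
noncomputable def lapApplyS {V : Type*} [Fintype V] (G : SimpleGraph V)
    (f : V → ℤ) (v : V) : ℤ :=
  ∑ w, lapS G v w * f w

/-- A divisor is winnable if it is linearly equivalent to an effective divisor. -/
def WinnableS {V : Type*} [Fintype V] (G : SimpleGraph V) (D : V → ℤ) : Prop :=
  ∃ f : V → ℤ, ∀ v, 0 ≤ D v - lapApplyS G f v

/-- The Baker–Norine rank of a divisor on a simple graph. -/
noncomputable def rankS {V : Type*} [Fintype V] (G : SimpleGraph V) (D : V → ℤ) : ℤ :=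
  sSup {r : ℤ | ∀ E : V → ℤ, (∀ v, 0 ≤ E v) → (∑ v, E v) = r →
    WinnableS G (fun v => D v - E v)}

/-!
Modulo principal divisors, `lap δ_v = 2δ_v - δ_(v-1) - δ_(v+1) ≡ 0` says that `v ↦ [δ_v]` is an
arithmetic progression whose step `t` satisfies `n • t = 0`, so
`[D] = deg D • [δ_0] + (∑ v • D v) • t`. Together with the invariance of `deg` and of
`∑ v • D v mod n` under chip firing, this identifies `Pic C_n` with `ℤ × ℤ/n`. Hence `D` is
winnable iff `deg D > 0`, or `deg D = 0` and `D` is principal (a class of degree `d > 0` contains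
`(d - 1) δ_0 + δ_k`). For `deg D = d > 0` every effective `E` of degree `d - 1` leaves `D - E` of
degree `1`, while a suitable `E` of degree `d` leaves a nonprincipal class of degree `0`; so
`r(D) = d - 1`, and comparing `D` with `-D` gives Riemann–Roch.
-/

open SimpleGraph

section Divisors

variable {V : Type*} [Fintype V] (G : SimpleGraph V)

theorem degS_eq_degree [DecidableRel G.Adj] (v : V) : degS G v = G.degree v := by
  rw [degS, ← card_neighborSet_eq_degree, ← Nat.card_eq_fintype_card, Nat.card_coe_set_eq]
  rfl

theorem lapApplyS_eq [DecidableRel G.Adj] (f : V → ℤ) (v : V) :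
    lapApplyS G f v = G.degree v * f v - ∑ w ∈ G.neighborFinset v, f w := by
  classical
  have hsplit : ∀ w, lapS G v w * f w =
      (if v = w then G.degree v * f w else 0) - (if G.Adj v w then f w else 0) := by
    intro w
    unfold lapS
    by_cases h : v = w
    · subst h; simp [degS_eq_degree]
    · by_cases hadj : G.Adj v w <;> simp [h, hadj]
  simp only [lapApplyS, hsplit, sum_sub_distrib, sum_ite_eq, mem_univ, if_true,
    neighborFinset_eq_filter, sum_filter]

variable {G}

theorem WinnableS.add_of_nonneg {D E : V → ℤ} (hD : WinnableS G D) (hE : ∀ v, 0 ≤ E v) :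
    WinnableS G (fun v => D v + E v) := by
  obtain ⟨f, hf⟩ := hD
  exact ⟨f, fun v => by linarith [hf v, hE v]⟩

theorem rankS_eq_of_forall_winnableS_of_not_winnableS {D : V → ℤ} {r : ℤ}
    (hwin : ∀ E : V → ℤ, (∀ v, 0 ≤ E v) → ∑ v, E v = r → WinnableS G (fun v => D v - E v))
    {E₀ : V → ℤ} (hE₀ : ∀ v, 0 ≤ E₀ v) (hdeg : ∑ v, E₀ v = r + 1)
    (hnot : ¬ WinnableS G (fun v => D v - E₀ v)) : rankS G D = r := by
  classical
  have hV : Nonempty V := by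
    by_contra hV
    rw [not_nonempty_iff] at hV
    exact hnot ⟨0, fun v => isEmptyElim v⟩
  obtain ⟨v₀⟩ := hV
  refine IsGreatest.csSup_eq ⟨hwin, fun s hs => ?_⟩
  -- if `s > r`, removing `E₀` plus `s - r - 1` chips at `v₀` is winnable, hence so is removing `E₀`
  by_contra! hrs
  set P : V → ℤ := Pi.single v₀ (s - r - 1)
  have hP : ∀ v, 0 ≤ P v := fun v => by
    rcases eq_or_ne v v₀ with rfl | h <;> simp [P, *]; omega
  have hpad := hs (E₀ + P) (fun v => add_nonneg (hE₀ v) (hP v)) (by simp [P, sum_add_distrib, hdeg])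
  obtain ⟨f, hf⟩ := hpad.add_of_nonneg hP
  exact hnot ⟨f, fun v => by
    simpa only [Pi.add_apply, sub_add_eq_sub_sub, sub_add_cancel] using hf v⟩

theorem rankS_eq_neg_one {D : V → ℤ} (h : ¬ WinnableS G D) : rankS G D = -1 :=
  rankS_eq_of_forall_winnableS_of_not_winnableS (fun E hE hdeg => absurd hdeg (by
      have := sum_nonneg fun v (_ : v ∈ univ) => hE v; omega))
    (E₀ := 0) (fun _ => le_rfl) (by simp) (by simpa using h)

end Divisors

open scoped Fin.CommRing

namespace CycleDivisor

variable {n : ℕ}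

def abelJacobi : (Fin n → ℤ) →+ ZMod n where
  toFun D := ∑ v, (D v : ZMod n) * v.val
  map_zero' := by simp
  map_add' D E := by simp only [Pi.add_apply, Int.cast_add, add_mul, sum_add_distrib]

theorem abelJacobi_apply (D : Fin n → ℤ) : abelJacobi D = ∑ v, (D v : ZMod n) * v.val := rfl

theorem abelJacobi_single (v : Fin n) (c : ℤ) : abelJacobi (Pi.single v c) = c * v.val := by
  simp [abelJacobi_apply, Pi.single_apply]

variable [NeZero n]

def lap : (Fin n → ℤ) →+ (Fin n → ℤ) where
  toFun f v := 2 * f v - f (v - 1) - f (v + 1)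
  map_zero' := by ext; simp
  map_add' f g := by ext; simp only [Pi.add_apply]; ring

theorem lap_apply (f : Fin n → ℤ) (v : Fin n) : lap f v = 2 * f v - f (v - 1) - f (v + 1) := rfl

theorem natCast_val_add_one (v : Fin n) : (((v + 1 : Fin n) : ℕ) : ZMod n) = v.val + 1 := by
  rw [Fin.val_add, ZMod.natCast_mod, Nat.cast_add, Fin.val_one', ZMod.natCast_mod, Nat.cast_one]

theorem sum_lap (f : Fin n → ℤ) : ∑ v, lap f v = 0 := by
  have hprev : ∑ v, f (v - 1) = ∑ v, f v := Equiv.sum_comp (Equiv.subRight 1) f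
  have hnext : ∑ v, f (v + 1) = ∑ v, f v := Equiv.sum_comp (Equiv.addRight 1) f
  simp only [lap_apply, sum_sub_distrib, ← mul_sum, hprev, hnext]
  ring

theorem abelJacobi_lap (f : Fin n → ℤ) : abelJacobi (lap f) = 0 := by
  have hprev : ∑ v : Fin n, (f (v - 1) : ZMod n) * v.val = ∑ v, (f v : ZMod n) * (v.val + 1) := by
    rw [← Equiv.sum_comp (Equiv.addRight 1)]
    simp [natCast_val_add_one]
  have hnext : ∑ v : Fin n, (f (v + 1) : ZMod n) * v.val = ∑ v, (f v : ZMod n) * (v.val - 1) := by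
    rw [← Equiv.sum_comp (Equiv.addRight 1) (fun v => (f v : ZMod n) * (v.val - 1))]
    simp [natCast_val_add_one]
  rw [abelJacobi_apply]
  simp only [lap_apply, Int.cast_sub, Int.cast_mul, sub_mul, sum_sub_distrib, hprev, hnext]
  rw [← sum_sub_distrib, ← sum_sub_distrib]
  exact sum_eq_zero fun v _ => by push_cast; ring

theorem lap_single (v : Fin n) :
    lap (Pi.single v 1) = 2 • Pi.single v 1 - Pi.single (v + 1) 1 - Pi.single (v - 1) 1 := by
  ext w
  simp only [lap_apply, Pi.sub_apply, Pi.smul_apply, Pi.single_apply, sub_eq_iff_eq_add,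
    ← eq_sub_iff_add_eq]
  ring

theorem mem_range_lap {D : Fin n → ℤ} (hdeg : ∑ v, D v = 0) (hAJ : abelJacobi D = 0) :
    D ∈ lap.range := by
  set π := QuotientAddGroup.mk' (lap (n := n)).range
  set δ : Fin n → Fin n → ℤ := fun v => Pi.single v 1
  set t := π (δ 1) - π (δ 0)
  have hstep : ∀ v, π (δ v) - π (δ (v - 1)) = π (δ (v + 1)) - π (δ v) := by
    intro v
    have h0 : π (lap (δ v)) = 0 := (QuotientAddGroup.eq_zero_iff _).2 ⟨δ v, rfl⟩
    rw [lap_single, map_sub, map_sub, map_nsmul, two_nsmul] at h0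
    dsimp only [δ]
    rw [← sub_eq_zero, ← h0]
    abel
  have hdiff : ∀ k : ℕ, π (δ (k + 1)) - π (δ k) = t := by
    intro k
    induction k with
    | zero => simp [t]
    | succ k ih => rw [Nat.cast_succ, ← hstep, add_sub_cancel_right, ih]
  have hprog : ∀ k : ℕ, π (δ k) = π (δ 0) + k • t := by
    intro k
    induction k with
    | zero => simp
    | succ k ih =>
      rw [Nat.cast_succ, ← sub_add_cancel (π (δ _)) (π (δ k)), hdiff, ih, succ_nsmul]
      abel
  have hnt : n • t = 0 := by simpa using (hprog n).symm
  obtain ⟨q, hq⟩ : (n : ℤ) ∣ ∑ v, D v * v.val := by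
    rw [← ZMod.intCast_zmod_eq_zero_iff_dvd, ← hAJ, abelJacobi_apply]
    push_cast
    rfl
  have hD : D = ∑ v, D v • δ v := by
    ext w
    simp [δ, Finset.sum_apply, Pi.single_apply]
  rw [← QuotientAddGroup.eq_zero_iff, ← QuotientAddGroup.mk'_apply, hD, map_sum]
  calc ∑ v, π (D v • δ v) = ∑ v, (D v • π (δ 0) + (D v * v.val) • t) := by
        refine sum_congr rfl fun v _ => ?_
        rw [map_zsmul, ← Fin.cast_val_eq_self v, hprog, Fin.cast_val_eq_self, zsmul_add, mul_zsmul,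
          natCast_zsmul]
    _ = 0 := by
        rw [sum_add_distrib, ← sum_smul, ← sum_smul, hdeg, hq, mul_zsmul', natCast_zsmul, hnt]
        simp

theorem mem_range_lap_iff {D : Fin n → ℤ} :
    D ∈ lap.range ↔ ∑ v, D v = 0 ∧ abelJacobi D = 0 := by
  refine ⟨?_, fun h => mem_range_lap h.1 h.2⟩
  rintro ⟨f, rfl⟩
  exact ⟨sum_lap f, abelJacobi_lap f⟩

theorem exists_nonneg_sum_abelJacobi (c : ℕ) (z : ZMod n) :
    ∃ E : Fin n → ℤ, (∀ v, 0 ≤ E v) ∧ ∑ v, E v = c + 1 ∧ abelJacobi E = z := by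
  refine ⟨Pi.single 0 (c : ℤ) + Pi.single ⟨z.val, z.val_lt⟩ 1, fun v => ?_,
    by simp [sum_add_distrib], ?_⟩
  · simp only [Pi.add_apply, Pi.single_apply]
    split_ifs <;> omega
  · simp [abelJacobi_single]

end CycleDivisor

section Cycle

open CycleDivisor

variable {m : ℕ}

theorem ncard_edgeSet_cycleGraph : (cycleGraph (m + 3)).edgeSet.ncard = m + 3 := by
  classical
  have h := sum_degrees_eq_twice_card_edges (cycleGraph (m + 3))
  simp only [cycleGraph_degree_three_le, sum_const, card_univ, Fintype.card_fin, smul_eq_mul] at h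
  rw [← coe_edgeFinset, Set.ncard_coe_finset]
  omega

theorem lapApplyS_cycleGraph (f : Fin (m + 3) → ℤ) : lapApplyS (cycleGraph (m + 3)) f = lap f := by
  classical
  ext v
  have hne : v - 1 ≠ v + 1 := by
    intro h
    have hdeg := cycleGraph_degree_three_le (v := v)
    simp [cycleGraph_degree_two_le, h] at hdeg
  rw [lapApplyS_eq, cycleGraph_degree_three_le, cycleGraph_neighborFinset, sum_pair hne, lap_apply]
  push_cast
  ring

theorem winnableS_cycleGraph_iff_exists {D : Fin (m + 3) → ℤ} :
    WinnableS (cycleGraph (m + 3)) D ↔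
      ∃ E : Fin (m + 3) → ℤ, (∀ v, 0 ≤ E v) ∧ D - E ∈ lap.range := by
  simp only [WinnableS, lapApplyS_cycleGraph]
  constructor
  · rintro ⟨f, hf⟩
    exact ⟨D - lap f, hf, f, by simp⟩
  · rintro ⟨E, hE, f, hf⟩
    exact ⟨f, fun v => by simp [hf, hE v]⟩

theorem winnableS_cycleGraph_iff {D : Fin (m + 3) → ℤ} :
    WinnableS (cycleGraph (m + 3)) D ↔ 0 < ∑ v, D v ∨ (∑ v, D v = 0 ∧ abelJacobi D = 0) := by
  rw [winnableS_cycleGraph_iff_exists]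
  constructor
  · rintro ⟨E, hE, hDE⟩
    obtain ⟨hsum, hAJ⟩ := mem_range_lap_iff.1 hDE
    simp only [Pi.sub_apply, sum_sub_distrib, sub_eq_zero] at hsum
    rw [hsum]
    rcases (sum_nonneg fun v (_ : v ∈ univ) => hE v).lt_or_eq with hpos | hzero
    · exact Or.inl hpos
    · have hE0 : E = 0 := funext fun v =>
        (sum_eq_zero_iff_of_nonneg fun v _ => hE v).1 hzero.symm v (mem_univ v)
      rw [hE0, sub_zero] at hAJ
      exact Or.inr ⟨hzero.symm, hAJ⟩
  · rintro (hpos | ⟨hsum, hAJ⟩)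
    · obtain ⟨E, hE, hEsum, hEAJ⟩ :=
        exists_nonneg_sum_abelJacobi (n := m + 3) (∑ v, D v - 1).toNat (abelJacobi D)
      refine ⟨E, hE, mem_range_lap ?_ ?_⟩
      · simp only [Pi.sub_apply, sum_sub_distrib, hEsum]
        omega
      · rw [map_sub, hEAJ, sub_self]
    · exact ⟨0, fun _ => le_rfl, mem_range_lap_iff.2 ⟨by simpa using hsum, by simpa using hAJ⟩⟩

theorem rankS_cycleGraph_of_pos {D : Fin (m + 3) → ℤ} (hpos : 0 < ∑ v, D v) :
    rankS (cycleGraph (m + 3)) D = ∑ v, D v - 1 := by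
  obtain ⟨E₀, hE₀, hE₀sum, hE₀AJ⟩ :=
    exists_nonneg_sum_abelJacobi (n := m + 3) (∑ v, D v - 1).toNat (abelJacobi D + 1)
  -- `D - E₀` has degree `0` and Abel–Jacobi class `-1 ≠ 0`
  refine rankS_eq_of_forall_winnableS_of_not_winnableS (fun E _ hE => ?_) hE₀ (by omega) ?_
  · rw [winnableS_cycleGraph_iff, sum_sub_distrib, hE]
    omega
  · rw [winnableS_cycleGraph_iff, sum_sub_distrib, hE₀sum,
      show (fun v => D v - E₀ v) = D - E₀ from rfl, map_sub, hE₀AJ]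
    have : Fact (1 < m + 3) := ⟨by omega⟩
    simp only [sub_add_cancel_left, neg_eq_zero, one_ne_zero, and_false, or_false]
    omega

theorem rankS_cycleGraph_of_sum_eq_zero {D : Fin (m + 3) → ℤ} (hsum : ∑ v, D v = 0)
    (hAJ : abelJacobi D = 0) : rankS (cycleGraph (m + 3)) D = 0 := by
  refine rankS_eq_of_forall_winnableS_of_not_winnableS (fun E hE hEsum => ?_) (E₀ := Pi.single 0 1)
    (fun v => by rcases eq_or_ne v 0 with rfl | h <;> simp [*]) (by simp) ?_
  · have hE0 : E = 0 := funext fun v =>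
      (sum_eq_zero_iff_of_nonneg fun v _ => hE v).1 hEsum v (mem_univ v)
    simpa [hE0, winnableS_cycleGraph_iff] using Or.inr ⟨hsum, hAJ⟩
  · rw [winnableS_cycleGraph_iff, sum_sub_distrib, hsum]
    simp

theorem rankS_sub_rankS_neg_cycleGraph (D : Fin (m + 3) → ℤ) :
    rankS (cycleGraph (m + 3)) D - rankS (cycleGraph (m + 3)) (fun v => -D v) = ∑ v, D v := by
  have hsum : ∑ v, -D v = -∑ v, D v := sum_neg_distrib ..
  have hAJ : abelJacobi (fun v => -D v) = -abelJacobi D := map_neg abelJacobi D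
  rcases lt_trichotomy (∑ v, D v) 0 with hneg | hzero | hpos
  · rw [rankS_eq_neg_one (by simp [winnableS_cycleGraph_iff]; omega),
      rankS_cycleGraph_of_pos (by omega), hsum]
    ring
  · by_cases hD : abelJacobi D = 0
    · rw [rankS_cycleGraph_of_sum_eq_zero hzero hD,
        rankS_cycleGraph_of_sum_eq_zero (by simp [hzero]) (by simp [hAJ, hD]), hzero, sub_zero]
    · rw [rankS_eq_neg_one (by simp [winnableS_cycleGraph_iff, hzero, hD]),
        rankS_eq_neg_one (by simp [winnableS_cycleGraph_iff, hsum, hzero, hAJ, hD]), hzero,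
        sub_self]
  · rw [rankS_cycleGraph_of_pos hpos, rankS_eq_neg_one (by simp [winnableS_cycleGraph_iff]; omega)]
    ring

end Cycle

/-- **Riemann–Roch for a cycle.**
For the cycle graph `C n` on `n ≥ 3` vertices: the canonical divisor `K v = deg v - 2`
is the zero divisor, the genus `|E| - |V| + 1` is `1`, and for every divisor `D`,
`r(D) - r(-D) = deg D`. -/
theorem riemann_roch_for_cycle (n : ℕ) (hn : 3 ≤ n) :
    (∀ v : Fin n, (degS (SimpleGraph.cycleGraph n) v : ℤ) - 2 = 0) ∧
    (((SimpleGraph.cycleGraph n).edgeSet.ncard : ℤ) - (n : ℤ) + 1 = 1) ∧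
    (∀ D : Fin n → ℤ,
      rankS (SimpleGraph.cycleGraph n) D - rankS (SimpleGraph.cycleGraph n) (fun v => -D v)
        = ∑ v, D v) := by
  obtain ⟨m, rfl⟩ : ∃ m, n = m + 3 := ⟨n - 3, by omega⟩
  refine ⟨fun v => ?_, ?_, rankS_sub_rankS_neg_cycleGraph⟩
  · rw [degS_eq_degree, cycleGraph_degree_three_le]
    norm_num
  · rw [ncard_edgeSet_cycleGraph]
    push_cast
    ring
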